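/- arXiv:2401.17691 — 10 statements merged into one kernel-verified Lean document; each statement's English description precedes it below -/
import Mathlib

section
/- For all integers i ≥ 1, the closed-form stationary distribution of the joint (source state, Version Innovation Age) chain under the randomized stationary policy satisfies the interior balance equations Φ(p)·π₀(i) = q·(1−a)·π₁(i−1) and Φ(q)·π₁(i) = p·(1−a)·π₀(i−1). -/
/-!
Both exponents are floors: `kᵢ = ⌊(i+1)/2⌋` and `wᵢ = ⌊i/2⌋ + 1`. Hence `k (i+1) = w i` and
`w (i+1) = k i + 1`, so passing from `i` to `i + 1` turns `π₁ i` into `π₀ (i+1)` by one extra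
factor `q (1 - a) / Φ(p)`, and `π₀ i` into `π₁ (i+1)` by one extra factor `p (1 - a) / Φ(q)`.
-/

lemma ite_even_div_two_eq_succ_div_two (i : ℕ) :
    (if Even i then i / 2 else (i + 1) / 2) = (i + 1) / 2 := by
  split_ifs with hi
  · obtain ⟨m, rfl⟩ := hi
    omega
  · rfl

lemma ite_even_succ_div_two_eq_div_two_add_one (i : ℕ) :
    (if Even i then (i + 2) / 2 else (i + 1) / 2) = i / 2 + 1 := by
  split_ifs with hi
  · omega
  · obtain ⟨m, rfl⟩ := Nat.not_even_iff_odd.mp hi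
    omega

lemma add_one_sub_mul_pos {x a : ℝ} (hx : 0 ≤ x) (ha : 0 < a) (ha1 : a ≤ 1) :
    0 < x + (1 - x) * a := by
  nlinarith [mul_nonneg hx (sub_nonneg.mpr ha1)]

theorem via_interior_balance_general (p q a : ℝ)
    (hp : 0 < p) (hq : 0 < q)
    (ha : 0 < a) (ha1 : a ≤ 1)
    (Φ : ℝ → ℝ) (hΦ : ∀ x, Φ x = x + (1 - x) * a)
    (k w : ℕ → ℕ)
    (hk : ∀ i, k i = if Even i then i / 2 else (i + 1) / 2)
    (hw : ∀ i, w i = if Even i then (i + 2) / 2 else (i + 1) / 2)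
    (π₀ π₁ : ℕ → ℝ)
    (hπ₀ : ∀ i, π₀ i = p ^ k i * q ^ w i * a * (1 - a) ^ i /
      ((p + q) * Φ p ^ w i * Φ q ^ k i))
    (hπ₁ : ∀ i, π₁ i = p ^ w i * q ^ k i * a * (1 - a) ^ i /
      ((p + q) * Φ p ^ k i * Φ q ^ w i)) :
    ∀ i : ℕ, 1 ≤ i →
      Φ p * π₀ i = q * (1 - a) * π₁ (i - 1) ∧
      Φ q * π₁ i = p * (1 - a) * π₀ (i - 1) := by
  have hΦp : Φ p ≠ 0 := (hΦ p ▸ add_one_sub_mul_pos hp.le ha ha1).ne'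
  have hΦq : Φ q ≠ 0 := (hΦ q ▸ add_one_sub_mul_pos hq.le ha ha1).ne'
  have hk_eq (i : ℕ) : k i = (i + 1) / 2 := (hk i).trans (ite_even_div_two_eq_succ_div_two i)
  have hw_eq (i : ℕ) : w i = i / 2 + 1 := (hw i).trans (ite_even_succ_div_two_eq_div_two_add_one i)
  rintro i hi
  obtain ⟨i, rfl⟩ : ∃ j, i = j + 1 := ⟨i - 1, by omega⟩
  have hk_succ : k (i + 1) = w i := by rw [hk_eq, hw_eq]; omega
  have hw_succ : w (i + 1) = k i + 1 := by rw [hk_eq, hw_eq]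
  rw [Nat.add_sub_cancel, hπ₀, hπ₀, hπ₁, hπ₁, hk_succ, hw_succ]
  constructor <;> field_simp <;> ring

/-- Interior balance equations for the stationary distribution of the joint
(source state, Version Innovation Age) chain under the randomized stationary policy. -/
theorem via_interior_balance (p q a : ℝ)
    (hp : 0 < p) (hp1 : p < 1) (hq : 0 < q) (hq1 : q < 1)
    (ha : 0 < a) (ha1 : a ≤ 1)
    (Φ : ℝ → ℝ) (hΦ : ∀ x, Φ x = x + (1 - x) * a)
    (k w : ℕ → ℕ)
    (hk : ∀ i, k i = if Even i then i / 2 else (i + 1) / 2)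
    (hw : ∀ i, w i = if Even i then (i + 2) / 2 else (i + 1) / 2)
    (π₀ π₁ : ℕ → ℝ)
    (hπ₀ : ∀ i, π₀ i = p ^ k i * q ^ w i * a * (1 - a) ^ i /
      ((p + q) * Φ p ^ w i * Φ q ^ k i))
    (hπ₁ : ∀ i, π₁ i = p ^ w i * q ^ k i * a * (1 - a) ^ i /
      ((p + q) * Φ p ^ k i * Φ q ^ w i)) :
    ∀ i : ℕ, 1 ≤ i →
      Φ p * π₀ i = q * (1 - a) * π₁ (i - 1) ∧
      Φ q * π₁ i = p * (1 - a) * π₀ (i - 1) :=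
  via_interior_balance_general p q a hp hq ha ha1 Φ hΦ k w hk hw π₀ π₁ hπ₀ hπ₁
end

section
/- The closed-form stationary distribution of the joint (source state, Version Innovation Age) chain under the randomized stationary policy is a probability distribution: the family i ↦ π₀(i) + π₁(i) is summable and ∑_{i≥0} (π₀(i) + π₁(i)) = 1. -/
/-!
Split the series into even and odd indices. With `x = Φ p`, `y = Φ q` and
`r = p q (1 - a)² / (x y)`, both `π₀ (2m) + π₁ (2m)` and `π₀ (2m+1) + π₁ (2m+1)` are constant
multiples of `r ^ m`, so the series is a sum of two geometric series; `r < 1` because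
`p (1 - a) < x` and `q (1 - a) < y`. The two constants add up to exactly `1 - r`.
-/

theorem hasSum_of_even_odd_geometric {K : Type*} [NormedField K] {f : ℕ → K} {r cₑ cₒ : K}
    (hr : ‖r‖ < 1) (he : ∀ m, f (2 * m) = cₑ * r ^ m) (ho : ∀ m, f (2 * m + 1) = cₒ * r ^ m) :
    HasSum f ((cₑ + cₒ) / (1 - r)) := by
  have hg := hasSum_geometric_of_norm_lt_one hr
  rw [add_div]
  exact .even_add_odd (by simpa only [he, div_eq_mul_inv] using hg.mul_left cₑ)
    (by simpa only [ho, div_eq_mul_inv] using hg.mul_left cₒ)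

section StationaryTerms

variable {p q a x y : ℝ}

theorem stationary_even_pair (hpq : p + q ≠ 0) (hx : x ≠ 0) (hy : y ≠ 0) (m : ℕ) :
    p ^ m * q ^ (m + 1) * a * (1 - a) ^ (2 * m) / ((p + q) * x ^ (m + 1) * y ^ m) +
      p ^ (m + 1) * q ^ m * a * (1 - a) ^ (2 * m) / ((p + q) * x ^ m * y ^ (m + 1)) =
      (a * q / ((p + q) * x) + a * p / ((p + q) * y)) * (p * q * (1 - a) ^ 2 / (x * y)) ^ m := by
  rw [div_pow, mul_pow, mul_pow, pow_mul]
  field_simp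
  ring

theorem stationary_odd_pair (hpq : p + q ≠ 0) (hx : x ≠ 0) (hy : y ≠ 0) (m : ℕ) :
    p ^ (m + 1) * q ^ (m + 1) * a * (1 - a) ^ (2 * m + 1) / ((p + q) * x ^ (m + 1) * y ^ (m + 1)) +
      p ^ (m + 1) * q ^ (m + 1) * a * (1 - a) ^ (2 * m + 1) / ((p + q) * x ^ (m + 1) * y ^ (m + 1)) =
      2 * a * p * q * (1 - a) / ((p + q) * (x * y)) * (p * q * (1 - a) ^ 2 / (x * y)) ^ m := by
  rw [div_pow, mul_pow, mul_pow, pow_succ (1 - a), pow_mul]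
  field_simp
  ring

theorem stationary_ratio_norm_lt_one (hp : 0 ≤ p) (hq : 0 ≤ q) (ha : 0 < a) (ha1 : a ≤ 1)
    (hx : x = p + (1 - p) * a) (hy : y = q + (1 - q) * a) :
    ‖p * q * (1 - a) ^ 2 / (x * y)‖ < 1 := by
  have hpx : p * (1 - a) < x := by rw [hx]; linarith
  have hqy : q * (1 - a) < y := by rw [hy]; linarith
  have hb : 0 ≤ 1 - a := by linarith
  have hx₀ : 0 < x := lt_of_le_of_lt (by positivity) hpx
  have hy₀ : 0 < y := lt_of_le_of_lt (by positivity) hqy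
  rw [Real.norm_of_nonneg (by positivity), div_lt_one (by positivity),
    show p * q * (1 - a) ^ 2 = p * (1 - a) * (q * (1 - a)) by ring]
  exact mul_lt_mul'' hpx hqy (by positivity) (by positivity)

theorem stationary_weights_add (hpq : p + q ≠ 0) (hx₀ : x ≠ 0) (hy₀ : y ≠ 0)
    (hx : x = p + (1 - p) * a) (hy : y = q + (1 - q) * a) :
    a * q / ((p + q) * x) + a * p / ((p + q) * y) + 2 * a * p * q * (1 - a) / ((p + q) * (x * y)) =
      1 - p * q * (1 - a) ^ 2 / (x * y) := by
  field_simp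
  subst hx hy
  ring

end StationaryTerms

theorem via_stationary_is_prob_general (p q a : ℝ)
    (hp : 0 < p) (hq : 0 < q)
    (ha : 0 < a) (ha1 : a ≤ 1)
    (Φ : ℝ → ℝ) (hΦ : ∀ x, Φ x = x + (1 - x) * a)
    (k w : ℕ → ℕ)
    (hk : ∀ i, k i = if Even i then i / 2 else (i + 1) / 2)
    (hw : ∀ i, w i = if Even i then (i + 2) / 2 else (i + 1) / 2)
    (π₀ π₁ : ℕ → ℝ)
    (hπ₀ : ∀ i, π₀ i = p ^ k i * q ^ w i * a * (1 - a) ^ i /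
      ((p + q) * Φ p ^ w i * Φ q ^ k i))
    (hπ₁ : ∀ i, π₁ i = p ^ w i * q ^ k i * a * (1 - a) ^ i /
      ((p + q) * Φ p ^ k i * Φ q ^ w i)) :
    Summable (fun i : ℕ => π₀ i + π₁ i) ∧
    ∑' i : ℕ, (π₀ i + π₁ i) = 1 := by
  have hx₀ : 0 < Φ p := by rw [hΦ]; nlinarith
  have hy₀ : 0 < Φ q := by rw [hΦ]; nlinarith
  have hpq : p + q ≠ 0 := by positivity
  have hr := stationary_ratio_norm_lt_one hp.le hq.le ha ha1 (hΦ p) (hΦ q)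
  have hk_even (m : ℕ) : k (2 * m) = m := by rw [hk, if_pos (even_two_mul m)]; omega
  have hw_even (m : ℕ) : w (2 * m) = m + 1 := by rw [hw, if_pos (even_two_mul m)]; omega
  have hk_odd (m : ℕ) : k (2 * m + 1) = m + 1 := by
    rw [hk, if_neg (Nat.not_even_two_mul_add_one m)]; omega
  have hw_odd (m : ℕ) : w (2 * m + 1) = m + 1 := by
    rw [hw, if_neg (Nat.not_even_two_mul_add_one m)]; omega
  have hS := hasSum_of_even_odd_geometric (f := fun i => π₀ i + π₁ i) hr
    (fun m => by
      rw [hπ₀, hπ₁, hk_even, hw_even]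
      exact stationary_even_pair hpq hx₀.ne' hy₀.ne' m)
    (fun m => by
      rw [hπ₀, hπ₁, hk_odd, hw_odd]
      exact stationary_odd_pair hpq hx₀.ne' hy₀.ne' m)
  have hr_ne : 1 - p * q * (1 - a) ^ 2 / (Φ p * Φ q) ≠ 0 :=
    sub_ne_zero.2 fun h => by simp [← h] at hr
  rw [stationary_weights_add hpq hx₀.ne' hy₀.ne' (hΦ p) (hΦ q), div_self hr_ne] at hS
  exact ⟨hS.summable, hS.tsum_eq⟩

/-- The stationary distribution of the joint (source state, Version Innovation Age)
chain under the randomized stationary policy is a probability distribution. -/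
theorem via_stationary_is_prob (p q a : ℝ)
    (hp : 0 < p) (hp1 : p < 1) (hq : 0 < q) (hq1 : q < 1)
    (ha : 0 < a) (ha1 : a ≤ 1)
    (Φ : ℝ → ℝ) (hΦ : ∀ x, Φ x = x + (1 - x) * a)
    (k w : ℕ → ℕ)
    (hk : ∀ i, k i = if Even i then i / 2 else (i + 1) / 2)
    (hw : ∀ i, w i = if Even i then (i + 2) / 2 else (i + 1) / 2)
    (π₀ π₁ : ℕ → ℝ)
    (hπ₀ : ∀ i, π₀ i = p ^ k i * q ^ w i * a * (1 - a) ^ i /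
      ((p + q) * Φ p ^ w i * Φ q ^ k i))
    (hπ₁ : ∀ i, π₁ i = p ^ w i * q ^ k i * a * (1 - a) ^ i /
      ((p + q) * Φ p ^ k i * Φ q ^ w i)) :
    Summable (fun i : ℕ => π₀ i + π₁ i) ∧
    ∑' i : ℕ, (π₀ i + π₁ i) = 1 :=
  via_stationary_is_prob_general p q a hp hq ha ha1 Φ hΦ k w hk hw π₀ π₁ hπ₀ hπ₁
end

section
/- If the convergence condition √(pq)·(1−a) < √(Φ(p)·Φ(q)) holds (equivalently, p·q·(1−a)² < Φ(p)·Φ(q)), then the family i ↦ i·(π₀(i) + π₁(i)) is summable, so the average Version Innovation Age under the randomized stationary policy is finite. -/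
/-- Under the convergence condition, the average Version Innovation Age under the
randomized stationary policy is finite (the defining series is summable). -/
theorem via_average_summable (p q a : ℝ)
    (hp : 0 < p) (hp1 : p < 1) (hq : 0 < q) (hq1 : q < 1)
    (ha : 0 < a) (ha1 : a ≤ 1)
    (Φ : ℝ → ℝ) (hΦ : ∀ x, Φ x = x + (1 - x) * a)
    (k w : ℕ → ℕ)
    (hk : ∀ i, k i = if Even i then i / 2 else (i + 1) / 2)
    (hw : ∀ i, w i = if Even i then (i + 2) / 2 else (i + 1) / 2)
    (π₀ π₁ : ℕ → ℝ)
    (hπ₀ : ∀ i, π₀ i = p ^ k i * q ^ w i * a * (1 - a) ^ i /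
      ((p + q) * Φ p ^ w i * Φ q ^ k i))
    (hπ₁ : ∀ i, π₁ i = p ^ w i * q ^ k i * a * (1 - a) ^ i /
      ((p + q) * Φ p ^ k i * Φ q ^ w i))
    (hconv : Real.sqrt (p * q) * (1 - a) < Real.sqrt (Φ p * Φ q)) :
    Summable (fun i : ℕ => (i : ℝ) * (π₀ i + π₁ i)) := by
  have hΦp : 0 < Φ p := by rw [hΦ]; nlinarith
  have hΦq : 0 < Φ q := by rw [hΦ]; nlinarith
  have hpq : 0 < p + q := by linarith
  have h1a : 0 ≤ 1 - a := by linarith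
  have hnn : ∀ i : ℕ, 0 ≤ (i : ℝ) * (π₀ i + π₁ i) := by
    intro i
    have h0 : 0 ≤ π₀ i := by
      rw [hπ₀]
      apply div_nonneg
      · positivity
      · positivity
    have h1 : 0 ≤ π₁ i := by
      rw [hπ₁]
      apply div_nonneg
      · positivity
      · positivity
    positivity
  rcases eq_or_lt_of_le ha1 with heq | hlt
  · have hz : (fun i : ℕ => (i : ℝ) * (π₀ i + π₁ i)) = fun _ => 0 := by
      funext i
      match i with
      | 0 => simp
      | Nat.succ n =>
        rw [hπ₀, hπ₁, heq]
        simp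
    rw [hz]; exact summable_zero
  · have h1a' : 0 < 1 - a := by linarith
    obtain ⟨x, hxdef⟩ : ∃ t : ℝ, t = p * (1 - a) / Φ q := ⟨_, rfl⟩
    obtain ⟨y, hydef⟩ : ∃ t : ℝ, t = q * (1 - a) / Φ p := ⟨_, rfl⟩
    have hx0 : 0 < x := hxdef ▸ div_pos (mul_pos hp h1a') hΦq
    have hy0 : 0 < y := hydef ▸ div_pos (mul_pos hq h1a') hΦp
    have hxylt : x * y < 1 := by
      have h2 : p * q * (1 - a) ^ 2 < Φ p * Φ q := by
        have hs := mul_self_lt_mul_self (by positivity) hconv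
        have e1 : Real.sqrt (p * q) * Real.sqrt (p * q) = p * q :=
          Real.mul_self_sqrt (by positivity)
        have e2 : Real.sqrt (Φ p * Φ q) * Real.sqrt (Φ p * Φ q) = Φ p * Φ q :=
          Real.mul_self_sqrt (by positivity)
        nlinarith [hs, e1, e2]
      have e3 : x * y = p * q * (1 - a) ^ 2 / (Φ p * Φ q) := by
        rw [hxdef, hydef]
        field_simp
      rw [e3, div_lt_one (by positivity)]
      exact h2
    obtain ⟨r, hrdef⟩ : ∃ t : ℝ, t = Real.sqrt (x * y) := ⟨_, rfl⟩
    have hr0 : 0 ≤ r := hrdef ▸ Real.sqrt_nonneg _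
    have hr1 : r < 1 := by
      rw [hrdef, show (1 : ℝ) = Real.sqrt 1 by simp]
      exact Real.sqrt_lt_sqrt (by positivity) hxylt
    have hr2 : r * r = x * y := hrdef ▸ Real.mul_self_sqrt (by positivity)
    obtain ⟨C, hCdef⟩ : ∃ t : ℝ, t = a / ((p + q) * (1 - a)) := ⟨_, rfl⟩
    have hC0 : 0 < C := hCdef ▸ div_pos ha (mul_pos hpq h1a')
    have n1 : Φ p ≠ 0 := hΦp.ne'
    have n2 : Φ q ≠ 0 := hΦq.ne'
    have n3 : (1 : ℝ) - a ≠ 0 := h1a'.ne'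
    have n4 : p + q ≠ 0 := hpq.ne'
    have key0 : ∀ i : ℕ, π₀ i + π₁ i ≤ (2 * C * (x + y + 1)) * r ^ i := by
      intro i
      rcases Nat.even_or_odd i with hev | hod
      · obtain ⟨m, hm⟩ := hev
        have hki : k i = m := by rw [hk, if_pos ⟨m, hm⟩]; omega
        have hwi : w i = m + 1 := by rw [hw, if_pos ⟨m, hm⟩]; omega
        have hri : r ^ i = (x * y) ^ m := by
          rw [hm, pow_add, ← mul_pow, hr2]
        have e0 : π₀ i = C * ((x * y) ^ m * y) := by
          have e0' : π₀ i = C * (x ^ m * y ^ (m + 1)) := by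
            rw [hπ₀ i, hki, hwi, hm, hCdef, hxdef, hydef]
            rw [div_pow, div_pow, mul_pow, mul_pow]
            field_simp
            ring
          rw [e0']; ring
        have e1 : π₁ i = C * ((x * y) ^ m * x) := by
          have e1' : π₁ i = C * (x ^ (m + 1) * y ^ m) := by
            rw [hπ₁ i, hki, hwi, hm, hCdef, hxdef, hydef]
            rw [div_pow, div_pow, mul_pow, mul_pow]
            field_simp
            ring
          rw [e1']; ring
        rw [e0, e1, hri]
        have hX : 0 ≤ (x * y) ^ m := pow_nonneg (mul_pos hx0 hy0).le m
        nlinarith [mul_nonneg (mul_nonneg hC0.le hX) (by linarith : (0:ℝ) ≤ x + y + 2)]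
      · obtain ⟨m, hm⟩ := hod
        have hne : ¬ Even i := by
          rw [hm, Nat.even_iff]
          omega
        have hki : k i = m + 1 := by rw [hk, if_neg hne]; omega
        have hwi : w i = m + 1 := by rw [hw, if_neg hne]; omega
        have hri : r ^ i = (x * y) ^ m * r := by
          rw [hm, pow_succ, pow_mul, sq, hr2]
        have e0 : π₀ i = C * (x * y) ^ (m + 1) := by
          have e0' : π₀ i = C * (x ^ (m + 1) * y ^ (m + 1)) := by
            rw [hπ₀ i, hki, hwi, hm, hCdef, hxdef, hydef]
            rw [div_pow, div_pow, mul_pow, mul_pow]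
            field_simp
            ring
          rw [e0', mul_pow]
        have e1 : π₁ i = C * (x * y) ^ (m + 1) := by
          have e1' : π₁ i = C * (x ^ (m + 1) * y ^ (m + 1)) := by
            rw [hπ₁ i, hki, hwi, hm, hCdef, hxdef, hydef]
            rw [div_pow, div_pow, mul_pow, mul_pow]
            field_simp
            ring
          rw [e1', mul_pow]
        rw [e0, e1, hri]
        have hX : 0 ≤ (x * y) ^ m := pow_nonneg (mul_pos hx0 hy0).le m
        have hstep : (x * y) ^ (m + 1) = (x * y) ^ m * (r * r) := by
          rw [pow_succ, hr2]
        rw [hstep]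
        have hle : r * r ≤ (x + y + 1) * r := by
          have h1 : r * r ≤ r := mul_le_of_le_one_left hr0 hr1.le
          have h2 : r ≤ (x + y + 1) * r := le_mul_of_one_le_left hr0 (by linarith)
          linarith
        calc C * ((x * y) ^ m * (r * r)) + C * ((x * y) ^ m * (r * r))
            = (2 * (C * (x * y) ^ m)) * (r * r) := by ring
          _ ≤ (2 * (C * (x * y) ^ m)) * ((x + y + 1) * r) := by
              apply mul_le_mul_of_nonneg_left hle
              have := mul_nonneg hC0.le hX
              linarith
          _ = 2 * C * (x + y + 1) * ((x * y) ^ m * r) := by ring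
    have hgsum : Summable (fun i : ℕ => (2 * C * (x + y + 1)) * ((i : ℝ) * r ^ i)) := by
      apply Summable.mul_left
      have hnorm : ‖r‖ < 1 := by rw [Real.norm_eq_abs, abs_of_nonneg hr0]; exact hr1
      have := summable_pow_mul_geometric_of_norm_lt_one (R := ℝ) 1 hnorm
      simpa using this
    apply Summable.of_nonneg_of_le hnn _ hgsum
    intro i
    have hkey := key0 i
    have hi : (0 : ℝ) ≤ (i : ℝ) := Nat.cast_nonneg i
    calc (i : ℝ) * (π₀ i + π₁ i) ≤ (i : ℝ) * ((2 * C * (x + y + 1)) * r ^ i) :=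
          mul_le_mul_of_nonneg_left hkey hi
      _ = (2 * C * (x + y + 1)) * ((i : ℝ) * r ^ i) := by ring
end

section
/- The average Version Innovation Age under the randomized stationary policy equals ∑_{i≥1} i·(π₀(i) + π₁(i)) = 2pq(1−a) / ((p+q)·a). -/
set_option maxHeartbeats 2000000


/-- The average Version Innovation Age under the randomized stationary policy equals
2pq(1−a)/((p+q)a). -/
theorem via_average_value (p q a : ℝ)
    (hp : 0 < p) (hp1 : p < 1) (hq : 0 < q) (hq1 : q < 1)
    (ha : 0 < a) (ha1 : a ≤ 1)
    (Φ : ℝ → ℝ) (hΦ : ∀ x, Φ x = x + (1 - x) * a)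
    (k w : ℕ → ℕ)
    (hk : ∀ i, k i = if Even i then i / 2 else (i + 1) / 2)
    (hw : ∀ i, w i = if Even i then (i + 2) / 2 else (i + 1) / 2)
    (π₀ π₁ : ℕ → ℝ)
    (hπ₀ : ∀ i, π₀ i = p ^ k i * q ^ w i * a * (1 - a) ^ i /
      ((p + q) * Φ p ^ w i * Φ q ^ k i))
    (hπ₁ : ∀ i, π₁ i = p ^ w i * q ^ k i * a * (1 - a) ^ i /
      ((p + q) * Φ p ^ k i * Φ q ^ w i)) :
    ∑' i : ℕ, (i : ℝ) * (π₀ i + π₁ i) = 2 * p * q * (1 - a) / ((p + q) * a) := by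
  have hr0 : 0 ≤ 1 - a := by linarith
  have hP : Φ p = a + p * (1 - a) := by rw [hΦ]; ring
  have hQ : Φ q = a + q * (1 - a) := by rw [hΦ]; ring
  have hPpos : 0 < Φ p := by rw [hP]; nlinarith
  have hQpos : 0 < Φ q := by rw [hQ]; nlinarith
  have hPne : Φ p ≠ 0 := ne_of_gt hPpos
  have hQne : Φ q ≠ 0 := ne_of_gt hQpos
  have hpq : p + q ≠ 0 := by positivity
  have hane : a ≠ 0 := ne_of_gt ha
  set x : ℝ := p * q * (1 - a) ^ 2 / (Φ p * Φ q) with hxdef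
  have hx0 : 0 ≤ x := by positivity
  have hx1 : x < 1 := by
    rw [hxdef, div_lt_one (by positivity)]
    rw [hP, hQ]
    nlinarith [mul_pos ha ha, mul_nonneg (mul_nonneg ha.le hr0) (add_pos hp hq).le]
  have h1x : (0:ℝ) < 1 - x := by linarith
  have h1xne : (1:ℝ) - x ≠ 0 := ne_of_gt h1x
  -- index computations
  have hke : ∀ m : ℕ, k (2 * m) = m := by
    intro m; rw [hk, if_pos ⟨m, two_mul m⟩]; omega
  have hwe : ∀ m : ℕ, w (2 * m) = m + 1 := by
    intro m; rw [hw, if_pos ⟨m, two_mul m⟩]; omega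
  have hnodd : ∀ m : ℕ, ¬ Even (2 * m + 1) := by
    intro m h; rcases h with ⟨r, hr⟩; omega
  have hko : ∀ m : ℕ, k (2 * m + 1) = m + 1 := by
    intro m; rw [hk, if_neg (hnodd m)]; omega
  have hwo : ∀ m : ℕ, w (2 * m + 1) = m + 1 := by
    intro m; rw [hw, if_neg (hnodd m)]; omega
  -- closed forms
  set Ce : ℝ := a * (q * Φ q + p * Φ p) / ((p + q) * Φ p * Φ q) with hCe
  set Co : ℝ := 2 * a * (1 - a) * p * q / ((p + q) * Φ p * Φ q) with hCo
  have heven : ∀ m : ℕ, ((2 * m : ℕ) : ℝ) * (π₀ (2 * m) + π₁ (2 * m))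
      = (2 * Ce) * ((m : ℝ) * x ^ m) := by
    intro m
    have hxm : x ^ m = p ^ m * q ^ m * ((1 - a) ^ 2) ^ m / (Φ p ^ m * Φ q ^ m) := by
      rw [hxdef, div_pow, mul_pow, mul_pow, mul_pow]
    rw [hπ₀, hπ₁, hke, hwe, hCe, hxm]
    push_cast
    rw [pow_mul]
    field_simp
    ring
  have hodd : ∀ m : ℕ, ((2 * m + 1 : ℕ) : ℝ) * (π₀ (2 * m + 1) + π₁ (2 * m + 1))
      = (2 * Co) * ((m : ℝ) * x ^ m) + Co * x ^ m := by
    intro m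
    have hxm : x ^ m = p ^ m * q ^ m * ((1 - a) ^ 2) ^ m / (Φ p ^ m * Φ q ^ m) := by
      rw [hxdef, div_pow, mul_pow, mul_pow, mul_pow]
    rw [hπ₀, hπ₁, hko, hwo, hCo, hxm]
    push_cast
    have hra : (1 - a) ^ (2 * m + 1) = ((1 - a) ^ 2) ^ m * (1 - a) := by
      rw [pow_succ, pow_mul]
    rw [hra]
    field_simp
    ring
  -- summability
  have hSg : Summable (fun m : ℕ => x ^ m) := summable_geometric_of_lt_one hx0 hx1
  have hSm : Summable (fun m : ℕ => (m : ℝ) * x ^ m) := by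
    have := summable_pow_mul_geometric_of_norm_lt_one (R := ℝ) 1
      (r := x) (by rwa [Real.norm_eq_abs, abs_of_nonneg hx0])
    simpa using this
  have hSe : Summable (fun m : ℕ => ((2 * m : ℕ) : ℝ) * (π₀ (2 * m) + π₁ (2 * m))) := by
    simp_rw [heven]; exact hSm.mul_left _
  have hSo : Summable (fun m : ℕ =>
      ((2 * m + 1 : ℕ) : ℝ) * (π₀ (2 * m + 1) + π₁ (2 * m + 1))) := by
    simp_rw [hodd]; exact ((hSm.mul_left _).add (hSg.mul_left _))
  -- split the sum
  rw [← tsum_even_add_odd hSe hSo]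
  have hTm : ∑' m : ℕ, (m : ℝ) * x ^ m = x / (1 - x) ^ 2 :=
    tsum_coe_mul_geometric_of_norm_lt_one (by rwa [Real.norm_eq_abs, abs_of_nonneg hx0])
  have hTg : ∑' m : ℕ, x ^ m = (1 - x)⁻¹ := tsum_geometric_of_lt_one hx0 hx1
  have hTe : ∑' m : ℕ, ((2 * m : ℕ) : ℝ) * (π₀ (2 * m) + π₁ (2 * m))
      = (2 * Ce) * (x / (1 - x) ^ 2) := by
    simp_rw [heven]; rw [tsum_mul_left, hTm]
  have hTo : ∑' m : ℕ, ((2 * m + 1 : ℕ) : ℝ) * (π₀ (2 * m + 1) + π₁ (2 * m + 1))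
      = (2 * Co) * (x / (1 - x) ^ 2) + Co * (1 - x)⁻¹ := by
    simp_rw [hodd]
    rw [Summable.tsum_add (hSm.mul_left _) (hSg.mul_left _), tsum_mul_left, tsum_mul_left, hTm, hTg]
  set D : ℝ := a + (1 - a) * (p + q) with hD
  have hDpos : (0:ℝ) < D := by nlinarith
  have hDne : D ≠ 0 := ne_of_gt hDpos
  have h1xeq : 1 - x = a * D / (Φ p * Φ q) := by
    rw [hxdef, hD, hP, hQ]; field_simp; ring
  have e1 : x / (1 - x) ^ 2 = p * q * (1 - a) ^ 2 * (Φ p * Φ q) / (a ^ 2 * D ^ 2) := by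
    rw [h1xeq, hxdef, div_pow, div_div_div_eq]
    rw [div_eq_div_iff (by positivity) (by positivity)]
    ring
  have e2 : (1 - x)⁻¹ = (Φ p * Φ q) / (a * D) := by
    rw [h1xeq]; field_simp
  rw [hTe, hTo, e1, e2]
  have key : (1 - a) * (q * Φ q + p * Φ p) + 2 * p * q * (1 - a) ^ 2 + a * D = D ^ 2 := by
    rw [hP, hQ, hD]; ring
  have step1 : 2 * Ce * (p * q * (1 - a) ^ 2 * (Φ p * Φ q) / (a ^ 2 * D ^ 2))
      + (2 * Co * (p * q * (1 - a) ^ 2 * (Φ p * Φ q) / (a ^ 2 * D ^ 2))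
        + Co * ((Φ p * Φ q) / (a * D)))
      = 2 * p * q * (1 - a) / ((p + q) * a * D ^ 2)
        * ((1 - a) * (q * Φ q + p * Φ p) + 2 * p * q * (1 - a) ^ 2 + a * D) := by
    rw [hCe, hCo]
    field_simp
    ring
  rw [step1, key]
  field_simp
end

section
/- Under the change-aware policy, the closed-form stationary distribution of the joint (source state, Version Innovation Age) chain is a probability distribution with ∑_{i≥0} (σ₀(i) + σ₁(i)) = 1, and the average Version Innovation Age equals ∑_{i≥1} i·(σ₀(i) + σ₁(i)) = (1 − p_s)/p_s. -/
/-! For every age `i` the two components of the stationary law add up to `p_s (1 - p_s)^i`,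
since `q/(p+q) + p/(p+q) = 1`: the Version Innovation Age is geometric with success
probability `p_s`, whatever the source state. Normalization and mean are then the geometric
series `∑ r^i = 1/(1-r)` and its derivative series `∑ i r^i = r/(1-r)^2` at `r = 1 - p_s`. -/

section GeometricSeries

variable {s : ℝ}

theorem hasSum_mul_one_sub_pow (hs : 0 < s) (hs1 : s ≤ 1) :
    HasSum (fun i : ℕ => s * (1 - s) ^ i) 1 := by
  have hgeo := (hasSum_geometric_of_lt_one (sub_nonneg.mpr hs1) (sub_lt_self 1 hs)).mul_left s
  rwa [sub_sub_cancel, mul_inv_cancel₀ hs.ne'] at hgeo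

theorem hasSum_coe_mul_mul_one_sub_pow (hs : 0 < s) (hs1 : s ≤ 1) :
    HasSum (fun i : ℕ => (i : ℝ) * (s * (1 - s) ^ i)) ((1 - s) / s) := by
  have hr : ‖1 - s‖ < 1 := by
    rw [Real.norm_eq_abs, abs_lt]
    constructor <;> linarith
  have hmean := (hasSum_coe_mul_geometric_of_norm_lt_one hr).mul_left s
  rw [sub_sub_cancel, mul_div_left_comm, sq, div_mul_cancel_right₀ hs.ne', ← div_eq_mul_inv]
    at hmean
  simpa only [mul_left_comm] using hmean

end GeometricSeries

theorem stationary_add_eq_geometric {p q s : ℝ} (hpq : p + q ≠ 0) (i : ℕ) :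
    q * s * (1 - s) ^ i / (p + q) + p * s * (1 - s) ^ i / (p + q) = s * (1 - s) ^ i := by
  field_simp
  ring

theorem via_change_aware_general (p q ps : ℝ)
    (hp : 0 < p) (hq : 0 < q)
    (hps : 0 < ps) (hps1 : ps ≤ 1)
    (σ₀ σ₁ : ℕ → ℝ)
    (hσ₀ : ∀ i, σ₀ i = q * ps * (1 - ps) ^ i / (p + q))
    (hσ₁ : ∀ i, σ₁ i = p * ps * (1 - ps) ^ i / (p + q)) :
    Summable (fun i : ℕ => σ₀ i + σ₁ i) ∧
    ∑' i : ℕ, (σ₀ i + σ₁ i) = 1 ∧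
    Summable (fun i : ℕ => (i : ℝ) * (σ₀ i + σ₁ i)) ∧
    ∑' i : ℕ, (i : ℝ) * (σ₀ i + σ₁ i) = (1 - ps) / ps := by
  have hσ (i : ℕ) : σ₀ i + σ₁ i = ps * (1 - ps) ^ i := by
    rw [hσ₀, hσ₁, stationary_add_eq_geometric (by positivity)]
  have htotal : HasSum (fun i => σ₀ i + σ₁ i) 1 := by
    simpa only [hσ] using hasSum_mul_one_sub_pow hps hps1
  have hmean : HasSum (fun i : ℕ => (i : ℝ) * (σ₀ i + σ₁ i)) ((1 - ps) / ps) := by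
    simpa only [hσ] using hasSum_coe_mul_mul_one_sub_pow hps hps1
  exact ⟨htotal.summable, htotal.tsum_eq, hmean.summable, hmean.tsum_eq⟩

/-- Under the change-aware policy, the stationary distribution of the joint
(source state, Version Innovation Age) chain is a probability distribution and the
average Version Innovation Age equals (1 − p_s)/p_s. -/
theorem via_change_aware (p q ps : ℝ)
    (hp : 0 < p) (hp1 : p < 1) (hq : 0 < q) (hq1 : q < 1)
    (hps : 0 < ps) (hps1 : ps ≤ 1)
    (σ₀ σ₁ : ℕ → ℝ)
    (hσ₀ : ∀ i, σ₀ i = q * ps * (1 - ps) ^ i / (p + q))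
    (hσ₁ : ∀ i, σ₁ i = p * ps * (1 - ps) ^ i / (p + q)) :
    Summable (fun i : ℕ => σ₀ i + σ₁ i) ∧
    ∑' i : ℕ, (σ₀ i + σ₁ i) = 1 ∧
    Summable (fun i : ℕ => (i : ℝ) * (σ₀ i + σ₁ i)) ∧
    ∑' i : ℕ, (i : ℝ) * (σ₀ i + σ₁ i) = (1 - ps) / ps :=
  via_change_aware_general p q ps hp hq hps hps1 σ₀ σ₁ hσ₀ hσ₁
end

section
/- Suppose 0 < p_s < 1 and 2pq ≠ p + q. Then for every sampling probability p_α ∈ (0,1], the randomized stationary policy has average Version Innovation Age no larger than the change-aware policy, i.e. 2pq(1 − p_α·p_s)/((p+q)·p_α·p_s) ≤ (1 − p_s)/p_s, if and only if p_α ≥ 2pq / (p + q + (2pq − p − q)·p_s). -/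
/-- If 0 < p_s < 1 and 2pq ≠ p + q, the randomized stationary policy has average VIA
no larger than the change-aware policy iff p_α ≥ 2pq/(p + q + (2pq − p − q)p_s). -/
theorem via_rs_vs_change_aware_threshold (p q ps : ℝ)
    (hp : 0 < p) (hp1 : p < 1) (hq : 0 < q) (hq1 : q < 1)
    (hps : 0 < ps) (hps1 : ps < 1)
    (hne : 2 * p * q ≠ p + q) :
    ∀ pα : ℝ, 0 < pα → pα ≤ 1 →
      (2 * p * q * (1 - pα * ps) / ((p + q) * (pα * ps)) ≤ (1 - ps) / ps ↔
        2 * p * q / (p + q + (2 * p * q - p - q) * ps) ≤ pα) := by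
  intro pα hpα hpα1
  have hpq : 2 * p * q < p + q := by nlinarith
  have hD : 0 < p + q + (2 * p * q - p - q) * ps := by nlinarith
  have h1 : 0 < (p + q) * (pα * ps) := by positivity
  rw [div_le_div_iff₀ h1 hps, div_le_iff₀ hD]
  constructor <;> intro h <;> nlinarith [mul_pos hp hq, mul_pos hpα hps]
end

section
/- The closed-form stationary distribution of the three-dimensional chain (source state, reconstructed state, Age of Incorrect Version) under the randomized stationary policy is a probability distribution, π₀₀₀ + π₀₁₁ + π₁₁₀ + π₁₀₁ = 1, and the average Age of Incorrect Version equals π₀₁₁ + π₁₀₁ = 2pq(1−a) / ((p+q)·(p + q + (1−p−q)·a)). -/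
/-- The stationary distribution of the (source, reconstructed source, AoIV) chain
under the randomized stationary policy is a probability distribution, and the average
Age of Incorrect Version equals 2pq(1−a)/((p+q)(p+q+(1−p−q)a)). -/
theorem aoiv_prob_and_average (p q a : ℝ)
    (hp : 0 < p) (hp1 : p < 1) (hq : 0 < q) (hq1 : q < 1)
    (ha : 0 < a) (ha1 : a ≤ 1)
    (Φ : ℝ → ℝ) (hΦ : ∀ x, Φ x = x + (1 - x) * a)
    (D : ℝ) (hD : D = p + q + (1 - p - q) * a)
    (π₀₀₀ π₀₁₁ π₁₁₀ π₁₀₁ : ℝ)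
    (h000 : π₀₀₀ = q * Φ q / ((p + q) * D))
    (h011 : π₀₁₁ = p * q * (1 - a) / ((p + q) * D))
    (h110 : π₁₁₀ = p * Φ p / ((p + q) * D))
    (h101 : π₁₀₁ = p * q * (1 - a) / ((p + q) * D)) :
    π₀₀₀ + π₀₁₁ + π₁₁₀ + π₁₀₁ = 1 ∧
    π₀₁₁ + π₁₀₁ = 2 * p * q * (1 - a) / ((p + q) * (p + q + (1 - p - q) * a)) := by
  have hpq : p + q > 0 := by linarith
  have hDpos : D > 0 := by
    have : D = a + (1 - a) * (p + q) := by rw [hD]; ring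
    nlinarith
  constructor
  · rw [h000, h011, h110, h101, hΦ, hΦ]
    field_simp
    rw [hD]; ring
  · rw [h011, h101, hD]; ring
end

section
/- The closed-form Age of Incorrect Information distribution under the randomized stationary policy is a probability distribution: P(0) + ∑_{i≥1} P(i) = 1, the series being convergent. -/
/-! Each of the two summands of `P (i + 1)` is, up to the factor `p q / ((p + q) D)`, a geometric
series with ratio `(1 - a)(1 - x)`, `x ∈ {p, q}`. Since `1 - (1 - a)(1 - x) = Φ x`, the factor
`Φ x` cancels and each series sums to `1 - a`, so the tail is `2 p q (1 - a) / ((p + q) D)`;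
adding `P 0` gives `(p + q) D / ((p + q) D) = 1`. -/

lemma hasSum_one_sub_pow_succ_mul_one_sub_pow_mul {a x : ℝ} (h : |(1 - a) * (1 - x)| < 1) :
    HasSum (fun i : ℕ => (1 - a) ^ (i + 1) * (1 - x) ^ i * (x + (1 - x) * a)) (1 - a) := by
  have hΦ : x + (1 - x) * a = 1 - (1 - a) * (1 - x) := by ring
  have hΦ_ne : 1 - (1 - a) * (1 - x) ≠ 0 := (sub_pos.2 ((le_abs_self _).trans_lt h)).ne'
  have hsum := ((hasSum_geometric_of_abs_lt_one h).mul_left ((1 - a) * (x + (1 - x) * a))).congr_fun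
    fun i => show (1 - a) ^ (i + 1) * (1 - x) ^ i * (x + (1 - x) * a) = _ by rw [mul_pow]; ring
  rwa [hΦ, mul_assoc, mul_inv_cancel₀ hΦ_ne, mul_one, ← hΦ] at hsum

/-- The closed-form Age of Incorrect Information distribution under the randomized
stationary policy is a probability distribution. -/
theorem aoii_is_prob (p q a : ℝ)
    (hp : 0 < p) (hp1 : p < 1) (hq : 0 < q) (hq1 : q < 1)
    (ha : 0 < a) (ha1 : a ≤ 1)
    (Φ : ℝ → ℝ) (hΦ : ∀ x, Φ x = x + (1 - x) * a)
    (D : ℝ) (hD : D = p + q + (1 - p - q) * a)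
    (P : ℕ → ℝ)
    (hP0 : P 0 = (p ^ 2 + q ^ 2 + (p + q - p ^ 2 - q ^ 2) * a) / ((p + q) * D))
    (hP : ∀ i : ℕ, 1 ≤ i →
      P i = p * q * (1 - a) ^ i *
        ((1 - q) ^ (i - 1) * Φ q + (1 - p) ^ (i - 1) * Φ p) / ((p + q) * D)) :
    Summable (fun i : ℕ => P (i + 1)) ∧
    P 0 + ∑' i : ℕ, P (i + 1) = 1 := by
  have hpq : 0 < p + q := by linarith
  have hD_pos : 0 < D := by rw [hD]; nlinarith
  have hratio : ∀ x, 0 < x → x < 1 → |(1 - a) * (1 - x)| < 1 := fun x hx hx1 => by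
    rw [abs_of_nonneg (by nlinarith)]
    nlinarith
  have htail : HasSum (fun i : ℕ => P (i + 1))
      (p * q / ((p + q) * D) * ((1 - a) + (1 - a))) := by
    refine (((hasSum_one_sub_pow_succ_mul_one_sub_pow_mul (hratio q hq hq1)).add
      (hasSum_one_sub_pow_succ_mul_one_sub_pow_mul (hratio p hp hp1))).mul_left
      (p * q / ((p + q) * D))).congr_fun fun i => ?_
    rw [hP (i + 1) (by omega), hΦ, hΦ, Nat.add_sub_cancel]
    ring
  refine ⟨htail.summable, ?_⟩
  rw [htail.tsum_eq, hP0]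
  field_simp
  rw [hD]
  ring
end

section
/- The average Age of Incorrect Information under the randomized stationary policy equals ∑_{i≥1} i·P(i) = pq(1−a)·[p + q + (2−p−q)·a] / ((p+q)·Φ(p)·Φ(q)·D), the series being convergent. -/
/-! With `r x = (1 - a) * (1 - x)` one has `Φ x = 1 - r x`, and `i * P i` is
`p q / ((p + q) D)` times `(1 - a) * i * (r q ^ (i - 1) * Φ q + r p ^ (i - 1) * Φ p)`.
Since `∑ i r^(i-1) = 1 / (1 - r)^2`, each factor `Φ` cancels one power of `1 - r`, leaving
`(1 - a) (1 / Φ q + 1 / Φ p)`; finally `Φ p + Φ q = p + q + (2 - p - q) a`. -/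

theorem hasSum_succ_mul_geometric {𝕜 : Type*} [NormedDivisionRing 𝕜] [HasSummableGeomSeries 𝕜]
    {r : 𝕜} (hr : ‖r‖ < 1) :
    HasSum (fun i : ℕ => ((i + 1 : ℕ) : 𝕜) * r ^ i) (1 / (1 - r) ^ 2) := by
  simpa using hasSum_choose_mul_geometric_of_norm_lt_one 1 hr

theorem hasSum_succ_mul_geometric_mul_one_sub {𝕜 : Type*} [NormedField 𝕜]
    [HasSummableGeomSeries 𝕜] {r : 𝕜} (hr : ‖r‖ < 1) (c : 𝕜) :
    HasSum (fun i : ℕ => ((i + 1 : ℕ) : 𝕜) * (c * r ^ i * (1 - r))) (c / (1 - r)) := by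
  have hr1 : 1 - r ≠ 0 := sub_ne_zero.2 fun h => by simp [← h] at hr
  have h := (hasSum_succ_mul_geometric hr).mul_left (c * (1 - r))
  rw [show c * (1 - r) * (1 / (1 - r) ^ 2) = c / (1 - r) by field_simp] at h
  exact h.congr_fun fun i => by ring

theorem norm_one_sub_mul_one_sub_lt_one {a x : ℝ} (ha : 0 < a) (ha1 : a ≤ 1)
    (hx : 0 < x) (hx1 : x < 1) : ‖(1 - a) * (1 - x)‖ < 1 := by
  rw [Real.norm_eq_abs, abs_of_nonneg (by nlinarith)]
  nlinarith

theorem aoii_average_general (p q a : ℝ)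
    (hp : 0 < p) (hp1 : p < 1) (hq : 0 < q) (hq1 : q < 1)
    (ha : 0 < a) (ha1 : a ≤ 1)
    (Φ : ℝ → ℝ) (hΦ : ∀ x, Φ x = x + (1 - x) * a)
    (D : ℝ)
    (P : ℕ → ℝ)
    (hP : ∀ i : ℕ, 1 ≤ i →
      P i = p * q * (1 - a) ^ i *
        ((1 - q) ^ (i - 1) * Φ q + (1 - p) ^ (i - 1) * Φ p) / ((p + q) * D)) :
    Summable (fun i : ℕ => ((i + 1 : ℕ) : ℝ) * P (i + 1)) ∧
    ∑' i : ℕ, ((i + 1 : ℕ) : ℝ) * P (i + 1) =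
      p * q * (1 - a) * (p + q + (2 - p - q) * a) / ((p + q) * Φ p * Φ q * D) := by
  have hΦ_eq : ∀ x, Φ x = 1 - (1 - a) * (1 - x) := fun x => by rw [hΦ]; ring
  have hΦ_pos : ∀ x, 0 < x → 0 < Φ x := fun x hx => by rw [hΦ]; nlinarith
  have hsum : ∀ x, 0 < x → x < 1 → HasSum
      (fun i : ℕ => ((i + 1 : ℕ) : ℝ) * ((1 - a) * ((1 - a) * (1 - x)) ^ i * Φ x))
      ((1 - a) / Φ x) := fun x hx hx1 => by
    simpa only [hΦ_eq] using hasSum_succ_mul_geometric_mul_one_sub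
      (norm_one_sub_mul_one_sub_lt_one ha ha1 hx hx1) (1 - a)
  have hterm : ∀ i : ℕ, ((i + 1 : ℕ) : ℝ) * P (i + 1) =
      p * q / ((p + q) * D) * (((i + 1 : ℕ) : ℝ) * ((1 - a) * ((1 - a) * (1 - q)) ^ i * Φ q) +
        ((i + 1 : ℕ) : ℝ) * ((1 - a) * ((1 - a) * (1 - p)) ^ i * Φ p)) := fun i => by
    rw [hP (i + 1) (Nat.le_add_left 1 i), Nat.add_sub_cancel, mul_pow, mul_pow]
    ring
  have h := ((hsum q hq hq1).add (hsum p hp hp1)).mul_left (p * q / ((p + q) * D))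
  simp only [← hterm] at h
  refine ⟨h.summable, h.tsum_eq.trans ?_⟩
  have hΦ_add : Φ p + Φ q = p + q + (2 - p - q) * a := by rw [hΦ, hΦ]; ring
  rw [← hΦ_add, div_add_div _ _ (hΦ_pos q hq).ne' (hΦ_pos p hp).ne', div_mul_div_comm]
  congr 1 <;> ring

/-- The average Age of Incorrect Information under the randomized stationary policy. -/
theorem aoii_average (p q a : ℝ)
    (hp : 0 < p) (hp1 : p < 1) (hq : 0 < q) (hq1 : q < 1)
    (ha : 0 < a) (ha1 : a ≤ 1)
    (Φ : ℝ → ℝ) (hΦ : ∀ x, Φ x = x + (1 - x) * a)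
    (D : ℝ) (hD : D = p + q + (1 - p - q) * a)
    (P : ℕ → ℝ)
    (hP0 : P 0 = (p ^ 2 + q ^ 2 + (p + q - p ^ 2 - q ^ 2) * a) / ((p + q) * D))
    (hP : ∀ i : ℕ, 1 ≤ i →
      P i = p * q * (1 - a) ^ i *
        ((1 - q) ^ (i - 1) * Φ q + (1 - p) ^ (i - 1) * Φ p) / ((p + q) * D)) :
    Summable (fun i : ℕ => ((i + 1 : ℕ) : ℝ) * P (i + 1)) ∧
    ∑' i : ℕ, ((i + 1 : ℕ) : ℝ) * P (i + 1) =
      p * q * (1 - a) * (p + q + (2 - p - q) * a) / ((p + q) * Φ p * Φ q * D) :=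
  aoii_average_general p q a hp hp1 hq hq1 ha ha1 Φ hΦ D P hP
end

section
/- For a sampling probability p_α ∈ (0,1] and a threshold E_max ∈ (0,1], the time-averaged reconstruction error constraint P_E ≤ E_max, where P_E = 2pq(1 − p_α·p_s) / ((p+q)·[p + q + (1−p−q)·p_α·p_s]), holds if and only if p_α ≥ (2pq − E_max·(p+q)²) / (p_s·[2pq + E_max·(p+q)·(1−p−q)]). -/
/-- The time-averaged reconstruction error constraint P_E ≤ E_max holds iff the
sampling probability exceeds the stated threshold. -/
theorem reconstruction_error_constraint (p q ps pα Emax : ℝ)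
    (hp : 0 < p) (hp1 : p < 1) (hq : 0 < q) (hq1 : q < 1)
    (hps : 0 < ps) (hps1 : ps ≤ 1)
    (hpα : 0 < pα) (hpα1 : pα ≤ 1)
    (hE : 0 < Emax) (hE1 : Emax ≤ 1)
    (PE : ℝ)
    (hPE : PE = 2 * p * q * (1 - pα * ps) /
      ((p + q) * (p + q + (1 - p - q) * (pα * ps)))) :
    PE ≤ Emax ↔
      (2 * p * q - Emax * (p + q) ^ 2) /
        (ps * (2 * p * q + Emax * (p + q) * (1 - p - q))) ≤ pα := by
  have hx : 0 < pα * ps := mul_pos hpα hps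
  have hx1 : pα * ps ≤ 1 := by nlinarith
  have hD : 0 < (p + q) * (p + q + (1 - p - q) * (pα * ps)) := by
    have h1 : 0 < p + q + (1 - p - q) * (pα * ps) := by
      nlinarith [mul_nonneg (by linarith : (0:ℝ) ≤ 1 - pα * ps) (by linarith : (0:ℝ) ≤ p + q)]
    positivity
  have hB : 0 < ps * (2 * p * q + Emax * (p + q) * (1 - p - q)) := by
    have h2 : 0 < 2 * p * q + Emax * (p + q) * (1 - p - q) := by
      rcases le_or_gt 0 (1 - p - q) with h | h
      · nlinarith [mul_pos hp hq, mul_nonneg (mul_nonneg hE.le (by linarith : (0:ℝ) ≤ p + q)) h]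
      · nlinarith [mul_nonneg (by linarith : (0:ℝ) ≤ 1 - Emax)
          (mul_nonneg (by linarith : (0:ℝ) ≤ p + q) (by linarith : (0:ℝ) ≤ p + q - 1))]
    positivity
  rw [hPE, div_le_iff₀ hD, div_le_iff₀ hB]
  constructor <;> intro h <;> nlinarith
end
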